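/- arXiv:2407.05957 — 2 statements merged into one kernel-verified Lean document; each statement's English description precedes it below -/
import Mathlib

section
/- For every x in the open interval (0, 2π), the wrapped normal kernel satisfies lim_{h → 0⁺} 𝒦_h(x) = 0. -/
open Real Filter

/-- The wrapped normal kernel with bandwidth `h`. -/
noncomputable def wrappedNormalKernel (h x : ℝ) : ℝ :=
  (Real.sqrt (2 * π * h ^ 2))⁻¹ *
    ∑' m : ℤ, Real.exp (-(x + 2 * π * m) ^ 2 / (2 * h ^ 2))

lemma wnk_key (x : ℝ) (hx0 : 0 < x) (hx2 : x < 2 * π) (n : ℤ) :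
    ((|n| : ℤ) : ℝ) - 2 ≤ (x + 2 * π * n) ^ 2 / 4 := by
  rcases eq_or_ne n 0 with rfl | hn
  · simp only [abs_zero, Int.cast_zero]
    nlinarith [sq_nonneg (x + 2 * π * 0)]
  · set a : ℝ := ((|n| : ℤ) : ℝ) with ha
    have ha1 : (1 : ℝ) ≤ a := by
      have h1 : (1 : ℤ) ≤ |n| := Int.one_le_abs hn
      rw [ha]; exact_mod_cast h1
    have hπ : (3 : ℝ) < π := by
      have := Real.pi_gt_three
      linarith
    have habs : 2 * π * a - x ≤ |x + 2 * π * n| := by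
      have h1 : |2 * π * (n : ℝ)| - |(-x : ℝ)| ≤ |2 * π * n - (-x)| :=
        abs_sub_abs_le_abs_sub _ _
      have e1 : |2 * π * (n : ℝ)| = 2 * π * a := by
        rw [abs_mul, abs_of_pos (by positivity : (0:ℝ) < 2 * π), ha, Int.cast_abs]
      have e2 : 2 * π * (n : ℝ) - (-x) = x + 2 * π * n := by ring
      rw [e1, e2, abs_neg, abs_of_pos hx0] at h1
      linarith
    have hnn : 0 ≤ 2 * π * a - x := by nlinarith
    have hsq : (2 * π * a - x) ^ 2 ≤ (x + 2 * π * n) ^ 2 := by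
      rw [← sq_abs (x + 2 * π * n)]
      exact pow_le_pow_left₀ hnn habs 2
    nlinarith [sq_nonneg (2 * π * (a - 1) - 1), sq_nonneg (a - 1),
      mul_nonneg (by linarith : (0:ℝ) ≤ 2 * π - x) (by nlinarith : (0:ℝ) ≤ 4 * π * a - x - 2 * π)]

lemma wnk_summable_nat (x : ℝ) (hx0 : 0 < x) (hx2 : x < 2 * π) :
    Summable (fun n : ℤ => Real.exp (-(x + 2 * π * n) ^ 2 / 4)) := by
  have hbase : Summable (fun n : ℕ => Real.exp 2 * Real.exp (-1) ^ n) :=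
    (summable_geometric_of_lt_one (Real.exp_nonneg _)
      (Real.exp_lt_one_iff.2 (by norm_num))).mul_left _
  have hb : ∀ n : ℕ, Real.exp 2 * Real.exp (-1) ^ n = Real.exp (2 - (n : ℝ)) := by
    intro n
    rw [← Real.exp_nat_mul, ← Real.exp_add]
    ring_nf
  have key : ∀ n : ℤ, Real.exp (-(x + 2 * π * n) ^ 2 / 4) ≤ Real.exp (2 - ((|n| : ℤ) : ℝ)) := by
    intro n
    apply Real.exp_le_exp.2
    have := wnk_key x hx0 hx2 n
    linarith
  apply Summable.of_nat_of_neg_add_one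
  · apply Summable.of_nonneg_of_le (fun n => (Real.exp_pos _).le)
      (fun n => ?_) hbase
    rw [hb n]
    refine le_trans (key n) (Real.exp_le_exp.2 ?_)
    simp
  · apply Summable.of_nonneg_of_le (fun n => (Real.exp_pos _).le)
      (fun n => ?_) hbase
    rw [hb n]
    refine le_trans (key (-(n+1))) (Real.exp_le_exp.2 ?_)
    have : ((|(-(n+1) : ℤ)| : ℤ) : ℝ) = (n : ℝ) + 1 := by
      rw [abs_neg]
      push_cast [abs_of_nonneg (by positivity : (0:ℤ) ≤ (n:ℤ)+1)]
      ring
    rw [this]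
    linarith

/-- For every `x ∈ (0, 2π)`, `𝒦_h(x) → 0` as `h → 0⁺`. -/
theorem tendsto_wrappedNormalKernel_zero (x : ℝ) (hx : x ∈ Set.Ioo (0 : ℝ) (2 * π)) :
    Tendsto (fun h : ℝ => wrappedNormalKernel h x) (nhdsWithin 0 (Set.Ioi 0)) (nhds 0) := by
  obtain ⟨hx0, hx2⟩ := hx
  set δ : ℝ := min x (2 * π - x) with hδdef
  have hδ : 0 < δ := lt_min hx0 (by linarith)
  -- the pointwise lower bound on all shifts
  have hshift : ∀ n : ℤ, δ ^ 2 ≤ (x + 2 * π * n) ^ 2 := by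
    intro n
    have h1 : δ ≤ |x + 2 * π * n| := by
      rcases le_or_gt 0 n with hn | hn
      · have : δ ≤ x + 2 * π * n := by
          have : (0:ℝ) ≤ (n : ℝ) := by exact_mod_cast hn
          have := min_le_left x (2 * π - x)
          nlinarith [Real.pi_pos]
        calc δ ≤ x + 2 * π * n := this
          _ ≤ |x + 2 * π * n| := le_abs_self _
      · have hn0 : n + 1 ≤ 0 := hn
        have hn' : (n : ℝ) ≤ -1 := by
          have : ((n : ℝ)) + 1 ≤ 0 := by exact_mod_cast hn0
          linarith
        have : x + 2 * π * n ≤ -δ := by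
          have := min_le_right x (2 * π - x)
          nlinarith [Real.pi_pos]
        calc δ ≤ -(x + 2 * π * n) := by linarith
          _ ≤ |x + 2 * π * n| := neg_le_abs _
    calc δ ^ 2 ≤ |x + 2 * π * n| ^ 2 := pow_le_pow_left₀ hδ.le h1 2
      _ = (x + 2 * π * n) ^ 2 := sq_abs _
  set C : ℝ := ∑' n : ℤ, Real.exp (-(x + 2 * π * n) ^ 2 / 4) with hC
  have hCsum := wnk_summable_nat x hx0 hx2
  have hC0 : 0 ≤ C := tsum_nonneg fun n => (Real.exp_pos _).le
  set b : ℝ := δ ^ 2 / 4 with hb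
  have hb0 : 0 < b := by positivity
  -- the majorant tends to 0
  have hmaj : Tendsto (fun h : ℝ => (Real.sqrt (2 * π))⁻¹ * C *
      (h⁻¹ * Real.exp (-b / h ^ 2))) (nhdsWithin 0 (Set.Ioi 0)) (nhds 0) := by
    have hF : Tendsto (fun t : ℝ => t * Real.exp (-b * t ^ 2)) atTop (nhds 0) := by
      have h1 := tendsto_rpow_abs_mul_exp_neg_mul_sq_cocompact hb0 1
      have h2 : Tendsto (fun t : ℝ => |t| ^ (1:ℝ) * Real.exp (-b * t ^ 2)) atTop (nhds 0) :=
        h1.mono_left _root_.atTop_le_cocompact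
      refine h2.congr' ?_
      filter_upwards [eventually_ge_atTop (0:ℝ)] with t ht
      rw [Real.rpow_one, abs_of_nonneg ht]
    have hcomp : Tendsto (fun h : ℝ => h⁻¹ * Real.exp (-b * (h⁻¹) ^ 2))
        (nhdsWithin 0 (Set.Ioi 0)) (nhds 0) := hF.comp tendsto_inv_nhdsGT_zero
    have hcomp' : Tendsto (fun h : ℝ => h⁻¹ * Real.exp (-b / h ^ 2))
        (nhdsWithin 0 (Set.Ioi 0)) (nhds 0) := by
      refine hcomp.congr fun h => ?_
      rw [div_eq_mul_inv, ← inv_pow]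
    have := hcomp'.const_mul ((Real.sqrt (2 * π))⁻¹ * C)
    simpa using this
  -- squeeze
  refine squeeze_zero' ?_ ?_ hmaj
  · filter_upwards [self_mem_nhdsWithin] with h hh
    unfold wrappedNormalKernel
    have : (0:ℝ) ≤ (Real.sqrt (2 * π * h ^ 2))⁻¹ := by positivity
    exact mul_nonneg this (tsum_nonneg fun n => (Real.exp_pos _).le)
  · filter_upwards [self_mem_nhdsWithin,
      Ioo_mem_nhdsGT_of_mem (by constructor <;> norm_num : (0:ℝ) ∈ Set.Ico 0 1)]
      with h hh hh1
    have hhpos : 0 < h := hh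
    have hh1' : h < 1 := hh1.2
    unfold wrappedNormalKernel
    -- pointwise bound on each term
    have hterm : ∀ n : ℤ, Real.exp (-(x + 2 * π * n) ^ 2 / (2 * h ^ 2)) ≤
        Real.exp (-b / h ^ 2) * Real.exp (-(x + 2 * π * n) ^ 2 / 4) := by
      intro n
      rw [← Real.exp_add]
      apply Real.exp_le_exp.2
      rw [neg_div, neg_div, neg_div, ← neg_add, neg_le_neg_iff]
      have h1 : δ ^ 2 ≤ (x + 2 * π * n) ^ 2 := hshift n
      have h2 : (x + 2 * π * n) ^ 2 / (4 * h ^ 2) + (x + 2 * π * n) ^ 2 / (4 * h ^ 2)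
          = (x + 2 * π * n) ^ 2 / (2 * h ^ 2) := by
        field_simp; ring
      have h3 : b / h ^ 2 ≤ (x + 2 * π * n) ^ 2 / (4 * h ^ 2) := by
        rw [hb]
        rw [div_div]
        apply div_le_div_of_nonneg_right h1 (by positivity) |>.trans_eq
        · ring_nf
      have h4 : (x + 2 * π * n) ^ 2 / 4 ≤ (x + 2 * π * n) ^ 2 / (4 * h ^ 2) := by
        apply div_le_div_of_nonneg_left (by positivity) (by positivity)
        nlinarith
      linarith
    -- summability of original series
    have hsum : Summable (fun n : ℤ => Real.exp (-(x + 2 * π * n) ^ 2 / (2 * h ^ 2))) := by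
      apply Summable.of_nonneg_of_le (fun n => (Real.exp_pos _).le) hterm
        (hCsum.mul_left _)
    have htsum : (∑' n : ℤ, Real.exp (-(x + 2 * π * n) ^ 2 / (2 * h ^ 2)))
        ≤ Real.exp (-b / h ^ 2) * C := by
      rw [hC, ← tsum_mul_left]
      exact Summable.tsum_le_tsum hterm hsum (hCsum.mul_left _)
    have hsqrt : Real.sqrt (2 * π * h ^ 2) = Real.sqrt (2 * π) * h := by
      rw [Real.sqrt_mul (by positivity), Real.sqrt_sq hhpos.le]
    have hpos : (0:ℝ) < Real.sqrt (2 * π * h ^ 2) := by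
      rw [hsqrt]; positivity
    calc (Real.sqrt (2 * π * h ^ 2))⁻¹ * ∑' n : ℤ, Real.exp (-(x + 2 * π * n) ^ 2 / (2 * h ^ 2))
        ≤ (Real.sqrt (2 * π * h ^ 2))⁻¹ * (Real.exp (-b / h ^ 2) * C) := by
          exact mul_le_mul_of_nonneg_left htsum (by positivity)
      _ = (Real.sqrt (2 * π))⁻¹ * C * (h⁻¹ * Real.exp (-b / h ^ 2)) := by
          rw [hsqrt, mul_inv]
          ring
end

section
/- Let x₁, …, xₙ ∈ (0, 2π] with n ≥ 2 be pairwise distinct (x_i ≠ x_m for all i ≠ m). Then for each i ∈ {1, …, n}, the leave-one-out estimator satisfies lim_{h → 0⁺} f̂_h^{−i}(x_i) = 0, and consequently lim_{h → 0⁺} ℒ_CV(h) = 0. -/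
open Real Filter

/-- The leave-one-out kernel density estimator `f̂_h^{−i}`. -/
noncomputable def looEstimator {n : ℕ} (X : Fin n → ℝ) (i : Fin n) (h x : ℝ) : ℝ :=
  ((n : ℝ) - 1)⁻¹ * ∑ m ∈ Finset.univ.erase i, wrappedNormalKernel h (x - X m)

/-- The cross-validation pseudo-likelihood `ℒ_CV`. -/
noncomputable def pseudoLikelihoodCV {n : ℕ} (X : Fin n → ℝ) (h : ℝ) : ℝ :=
  ∏ i : Fin n, looEstimator X i h (X i)


lemma summable_nat_aux (x : ℝ) (s : ℝ) (hs : s = 1 ∨ s = -1) :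
    Summable fun n : ℕ => rexp (-(x + s * (2 * π * n)) ^ 2 / 4) := by
  have key : ∀ n : ℕ, (n : ℝ) ≤ (x + s * (2 * π * n)) ^ 2 / 4 + (x ^ 2 / 4 + 1) := by
    intro n
    have hn : (0 : ℝ) ≤ n := n.cast_nonneg
    have hπ : (3 : ℝ) < π := Real.pi_gt_three
    rcases hs with h | h <;> subst h
    · nlinarith [sq_nonneg (x + 2 * π * n - 1), sq_nonneg (x - 1),
        mul_nonneg (by nlinarith : (0:ℝ) ≤ 4 * π - 4) hn]
    · nlinarith [sq_nonneg (x - 2 * π * n + 1), sq_nonneg (x - 1),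
        mul_nonneg (by nlinarith : (0:ℝ) ≤ 4 * π - 4) hn]
  refine Summable.of_nonneg_of_le (fun n => (exp_pos _).le) (fun n => ?_)
    (Real.summable_exp_neg_nat.mul_left (rexp (x ^ 2 / 4 + 1)))
  rw [← Real.exp_add, Real.exp_le_exp]
  have := key n
  linarith

lemma summable_gauss (x : ℝ) : Summable fun m : ℤ => rexp (-(x + 2 * π * m) ^ 2 / 4) := by
  apply Summable.of_nat_of_neg
  · have := summable_nat_aux x 1 (Or.inl rfl)
    simpa using this
  · have := summable_nat_aux x (-1) (Or.inr rfl)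
    refine this.congr fun n => ?_
    push_cast
    ring_nf
lemma kernel_nonneg (h x : ℝ) : 0 ≤ wrappedNormalKernel h x := by
  apply mul_nonneg (by positivity)
  exact tsum_nonneg fun m => (exp_pos _).le

lemma kernel_tendsto {x : ℝ} (hx0 : x ≠ 0) (hx2 : |x| < 2 * π) :
    Tendsto (fun h => wrappedNormalKernel h x) (nhdsWithin 0 (Set.Ioi 0)) (nhds 0) := by
  have hπ : (0 : ℝ) < π := Real.pi_pos
  set δ : ℝ := min |x| (2 * π - |x|) with hδdef
  have hδ : 0 < δ := lt_min (abs_pos.2 hx0) (by linarith)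
  have hxabs : x ≤ |x| := le_abs_self x
  have hxabs' : -|x| ≤ x := neg_abs_le x
  have hlow : ∀ m : ℤ, δ ≤ |x + 2 * π * m| := by
    intro m
    rcases lt_trichotomy m 0 with hm | hm | hm
    · have hm1 : (m : ℝ) ≤ -1 := by
        have : m ≤ -1 := by omega
        exact_mod_cast this
      have h1 : x + 2 * π * m ≤ x - 2 * π := by nlinarith
      have h2 : δ ≤ -(x + 2 * π * m) := by
        have := min_le_right |x| (2 * π - |x|)
        simp only [← hδdef] at this
        linarith
      exact h2.trans (neg_le_abs _)
    · subst hm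
      simp only [Int.cast_zero, mul_zero, add_zero]
      exact min_le_left _ _
    · have hm1 : (1 : ℝ) ≤ m := by exact_mod_cast hm
      have h1 : x + 2 * π ≤ x + 2 * π * m := by nlinarith
      have h2 : δ ≤ x + 2 * π * m := by
        have := min_le_right |x| (2 * π - |x|)
        simp only [← hδdef] at this
        linarith
      exact h2.trans (le_abs_self _)
  set S : ℝ := ∑' m : ℤ, rexp (-(x + 2 * π * m) ^ 2 / 4) with hSdef
  set c : ℝ := δ ^ 2 / 4 with hcdef
  have hc : 0 < c := by positivity
  have hB : Tendsto (fun h : ℝ => (Real.sqrt (2 * π))⁻¹ * S *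
      (h⁻¹ * rexp (-c * h⁻¹))) (nhdsWithin 0 (Set.Ioi 0)) (nhds 0) := by
    have := ((tendsto_rpow_mul_exp_neg_mul_atTop_nhds_zero 1 c hc).comp
      tendsto_inv_nhdsGT_zero).const_mul ((Real.sqrt (2 * π))⁻¹ * S)
    simp only [Function.comp_def, Real.rpow_one, mul_zero] at this
    exact this
  refine squeeze_zero' (Eventually.of_forall fun h => kernel_nonneg h x) ?_ hB
  filter_upwards [Ioc_mem_nhdsGT (zero_lt_one : (0:ℝ) < 1)] with h hh
  obtain ⟨h0, h1⟩ := hh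
  have h0' : h ≠ 0 := ne_of_gt h0
  have hh2 : (0:ℝ) < h ^ 2 := by positivity
  have hterm : ∀ m : ℤ, rexp (-(x + 2 * π * m) ^ 2 / (2 * h ^ 2)) ≤
      rexp (-c * h⁻¹) * rexp (-(x + 2 * π * m) ^ 2 / 4) := by
    intro m
    rw [← Real.exp_add, Real.exp_le_exp]
    set a : ℝ := (x + 2 * π * (m : ℝ)) ^ 2 with hadef
    have ha : δ ^ 2 ≤ a := by
      have h3 := hlow m
      have h4 := sq_abs (x + 2 * π * (m : ℝ))
      nlinarith [abs_nonneg (x + 2 * π * (m : ℝ))]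
    have ha0 : 0 ≤ a := sq_nonneg _
    have key : 4 * c * h + a * h ^ 2 ≤ 2 * a := by
      rw [hcdef]
      have e1 : δ ^ 2 * h ≤ a * h := mul_le_mul_of_nonneg_right ha h0.le
      have e2 : a * h ≤ a := mul_le_of_le_one_right ha0 h1
      have e3 : a * h ^ 2 ≤ a := mul_le_of_le_one_right ha0 (by nlinarith)
      linarith
    have e : (-c * h⁻¹ + -a / 4) - (-a / (2 * h ^ 2)) =
        (2 * a - (4 * c * h + a * h ^ 2)) / (4 * h ^ 2) := by
      field_simp
      ring
    have hnn : 0 ≤ (2 * a - (4 * c * h + a * h ^ 2)) / (4 * h ^ 2) :=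
      div_nonneg (by linarith) (by positivity)
    linarith [e ▸ hnn]
  have fsum : Summable fun m : ℤ => rexp (-(x + 2 * π * m) ^ 2 / (2 * h ^ 2)) :=
    Summable.of_nonneg_of_le (fun m => (exp_pos _).le) hterm ((summable_gauss x).mul_left _)
  calc wrappedNormalKernel h x
      = (Real.sqrt (2 * π))⁻¹ * h⁻¹ *
        ∑' m : ℤ, rexp (-(x + 2 * π * m) ^ 2 / (2 * h ^ 2)) := by
        rw [wrappedNormalKernel, Real.sqrt_mul (by positivity), Real.sqrt_sq h0.le, mul_inv]
    _ ≤ (Real.sqrt (2 * π))⁻¹ * h⁻¹ * (rexp (-c * h⁻¹) * S) := by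
        apply mul_le_mul_of_nonneg_left _ (by positivity)
        calc (∑' m : ℤ, rexp (-(x + 2 * π * m) ^ 2 / (2 * h ^ 2)))
            ≤ ∑' m : ℤ, rexp (-c * h⁻¹) * rexp (-(x + 2 * π * m) ^ 2 / 4) :=
              Summable.tsum_le_tsum hterm fsum ((summable_gauss x).mul_left _)
          _ = rexp (-c * h⁻¹) * S := tsum_mul_left
    _ = (Real.sqrt (2 * π))⁻¹ * S * (h⁻¹ * rexp (-c * h⁻¹)) := by ring
/-- If `x₁, …, xₙ ∈ (0, 2π]` (`n ≥ 2`) are pairwise distinct, then each leave-one-out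
estimator satisfies `f̂_h^{−i}(x_i) → 0` as `h → 0⁺`, and consequently `ℒ_CV(h) → 0`
as `h → 0⁺`. -/
theorem tendsto_looEstimator_and_pseudoLikelihoodCV_zero
    {n : ℕ} (hn : 2 ≤ n) (X : Fin n → ℝ) (hX : ∀ i, X i ∈ Set.Ioc (0 : ℝ) (2 * π))
    (hdist : ∀ i m : Fin n, i ≠ m → X i ≠ X m) :
    (∀ i : Fin n,
        Tendsto (fun h : ℝ => looEstimator X i h (X i)) (nhdsWithin 0 (Set.Ioi 0)) (nhds 0)) ∧
      Tendsto (pseudoLikelihoodCV X) (nhdsWithin 0 (Set.Ioi 0)) (nhds 0) := by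
  have key : ∀ i : Fin n,
      Tendsto (fun h : ℝ => looEstimator X i h (X i)) (nhdsWithin 0 (Set.Ioi 0)) (nhds 0) := by
    intro i
    have hsum : Tendsto (fun h : ℝ => ∑ m ∈ Finset.univ.erase i,
        wrappedNormalKernel h (X i - X m)) (nhdsWithin 0 (Set.Ioi 0))
        (nhds (∑ m ∈ Finset.univ.erase i, (0:ℝ))) := by
      apply tendsto_finset_sum
      intro m hm
      have hmi : m ≠ i := Finset.ne_of_mem_erase hm
      apply kernel_tendsto
      · exact sub_ne_zero.mpr (hdist i m (fun e => hmi e.symm))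
      · have h1 := hX i
        have h2 := hX m
        rw [abs_lt]
        constructor <;> [linarith [h1.1, h2.2]; linarith [h1.2, h2.1]]
    simp only [Finset.sum_const_zero] at hsum
    have := hsum.const_mul ((n : ℝ) - 1)⁻¹
    simpa [looEstimator, mul_zero] using this
  refine ⟨key, ?_⟩
  have hprod : Tendsto (fun h : ℝ => ∏ i : Fin n, looEstimator X i h (X i))
      (nhdsWithin 0 (Set.Ioi 0)) (nhds (∏ _i : Fin n, (0:ℝ))) :=
    tendsto_finset_prod _ (fun i _ => key i)
  have hz : (∏ _i : Fin n, (0:ℝ)) = 0 := by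
    rw [Finset.prod_const, Finset.card_univ, Fintype.card_fin]
    exact zero_pow (by omega)
  rw [hz] at hprod
  exact hprod.congr (fun h => rfl)
end
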